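/- arXiv:2507.17316 — 6 statements merged into one kernel-verified Lean document; each statement's English description precedes it below -/
import Mathlib

section
/- Suppose n > (4/3)·log(1/δ) with δ ∈ (0,1). Let p̂ be any estimator and let p̂⁰ ∈ Δ^K denote the output of p̂ on the sample X_1 = ⋯ = X_n = K (so that n_{1,n} = ⋯ = n_{K−1,n} = 0). Then there exists p* ∈ Δ^K such that, with probability strictly greater than δ over n i.i.d. samples from p*, KL(p*‖p̂) ≥ (2·ln(1/δ))/(3n) · ( ln( 2·ln(1/δ)·(K−1) / (3n·∑_{i=1}^{K−1} p̂⁰(i)) ) − 1 ) + ∑_{i=1}^{K−1} p̂⁰(i). -/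
/-! The bound is witnessed by the two-point law `p*` with mass `ε = 2 log(1/δ) / (3n)` on a
coordinate `i₀ ≠ K` where `p̂⁰` is smallest, and mass `1 - ε` on `K`. Under `p*` the constant
sample `K, …, K` has probability `(1 - ε)^n > δ`, because `-log (1 - ε) < 3ε/2` for `ε < 1/2`.
On that sample the estimator outputs `p̂⁰`; writing `S = ∑_{i<K} p̂⁰(i)`, we have
`p̂⁰(i₀) ≤ S / (K - 1)` and `p̂⁰(K) = 1 - S`, so `log x ≤ x - 1` gives
`KL(p*‖p̂⁰) ≥ ε log (ε (K - 1) / S) + S - ε`. -/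

open scoped ENNReal
open MeasureTheory

/-- The probability simplex on `Fin K`. -/
def simplex (K : ℕ) : Set (Fin K → ℝ) :=
  {p | (∀ i, 0 ≤ p i) ∧ ∑ i, p i = 1}

/-- Kullback–Leibler divergence between two vectors on `Fin K`, with the
conventions `0 · log 0 = 0` and value `∞` if `p i > 0 = q i` for some `i`. -/
noncomputable def klD {K : ℕ} (p q : Fin K → ℝ) : ℝ≥0∞ :=
  if ∀ i, 0 < p i → 0 < q i then ENNReal.ofReal (∑ i, p i * Real.log (p i / q i)) else ⊤

/-- The law of `n` i.i.d. samples from the distribution `p` on `Fin K`. -/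
noncomputable def iidMeasure (n K : ℕ) (p : Fin K → ℝ) : Measure (Fin n → Fin K) :=
  ∑ x : Fin n → Fin K, (∏ t, ENNReal.ofReal (p (x t))) • Measure.dirac x

/-- `countTo x t i` is the number of indices `s` among the first `t` samples with `x s = i`. -/
def countTo {n K : ℕ} (x : Fin n → Fin K) (t : ℕ) (i : Fin K) : ℕ :=
  (Finset.univ.filter (fun s : Fin n => (s : ℕ) < t ∧ x s = i)).card

open Real

lemma neg_three_halves_mul_lt_log_one_sub {ε : ℝ} (hε0 : 0 < ε) (hε : ε < 1 / 2) :
    -(3 / 2 * ε) < log (1 - ε) := by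
  have h1ε : 0 < 1 - ε := by linarith
  -- `t ≤ sinh t` at `t = -log (1 - ε)` reads `-log (1 - ε) ≤ ε (2 - ε) / (2 (1 - ε))`.
  have hsinh := self_le_sinh_iff.2 (neg_nonneg.2 (log_nonpos h1ε.le (by linarith)))
  rw [sinh_eq, neg_neg, exp_log h1ε, exp_neg, exp_log h1ε] at hsinh
  have hbound : ((1 - ε)⁻¹ - (1 - ε)) / 2 < 3 / 2 * ε := by
    rw [div_lt_iff₀ two_pos, inv_eq_one_div, div_sub' h1ε.ne', div_lt_iff₀ h1ε]
    nlinarith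
  linarith

lemma exp_neg_lt_one_sub_pow {L : ℝ} {n : ℕ} (hL : 0 < L) (hn : 4 / 3 * L < n) :
    exp (-L) < (1 - 2 * L / (3 * n)) ^ n := by
  have hn0 : (0 : ℝ) < n := by linarith
  have hε0 : 0 < 2 * L / (3 * n) := by positivity
  have hε : 2 * L / (3 * n) < 1 / 2 := by
    rw [div_lt_iff₀ (by positivity)]; linarith
  have hlog := neg_three_halves_mul_lt_log_one_sub hε0 hε
  rw [← exp_log (by linarith : (0 : ℝ) < 1 - 2 * L / (3 * n)), ← exp_nat_mul]
  refine exp_lt_exp.2 ?_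
  calc -L = n * -(3 / 2 * (2 * L / (3 * n))) := by field_simp
    _ < n * log (1 - 2 * L / (3 * n)) := mul_lt_mul_of_pos_left hlog hn0

lemma Finset.exists_card_mul_le_sum {ι : Type*} {s : Finset ι} (hs : s.Nonempty) (f : ι → ℝ) :
    ∃ i ∈ s, s.card * f i ≤ ∑ j ∈ s, f j := by
  obtain ⟨i, hi, hmin⟩ := s.exists_min_image f hs
  exact ⟨i, hi, by simpa using s.card_nsmul_le_sum f (f i) hmin⟩

lemma Fin.exists_ne_mul_le_sum_erase {K : ℕ} (hK : 2 ≤ K) (j : Fin K) (q : Fin K → ℝ) :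
    ∃ i ≠ j, ((K : ℝ) - 1) * q i ≤ ∑ k ∈ Finset.univ.erase j, q k := by
  have hcard : (Finset.univ.erase j).card = K - 1 := by simp
  obtain ⟨i, hi, hqi⟩ := Finset.exists_card_mul_le_sum
    (s := Finset.univ.erase j) (Finset.card_pos.1 (by omega)) q
  rw [hcard, Nat.cast_sub (by omega), Nat.cast_one] at hqi
  exact ⟨i, Finset.ne_of_mem_erase hi, hqi⟩

lemma prod_le_iidMeasure_of_mem {n K : ℕ} (p : Fin K → ℝ) {E : Set (Fin n → Fin K)}
    {x : Fin n → Fin K} (hx : x ∈ E) : ∏ t, ENNReal.ofReal (p (x t)) ≤ iidMeasure n K p E := by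
  rw [iidMeasure, Measure.finsetSum_apply]
  refine le_trans ?_ (Finset.single_le_sum (fun _ _ => zero_le) (Finset.mem_univ x))
  simp [Measure.dirac_apply_of_mem hx]

lemma ofReal_pow_le_iidMeasure_of_const_mem {n K : ℕ} (p : Fin K → ℝ) {E : Set (Fin n → Fin K)}
    {i : Fin K} (hp : 0 ≤ p i) (hi : (fun _ => i) ∈ E) :
    ENNReal.ofReal (p i ^ n) ≤ iidMeasure n K p E := by
  simpa [ENNReal.ofReal_pow hp] using prod_le_iidMeasure_of_mem p hi

noncomputable def twoPoint {K : ℕ} (i j : Fin K) (ε : ℝ) : Fin K → ℝ :=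
  Pi.single i ε + Pi.single j (1 - ε)

lemma twoPoint_apply_left {K : ℕ} {i j : Fin K} (hij : i ≠ j) (ε : ℝ) :
    twoPoint i j ε i = ε := by
  simp [twoPoint, hij]

lemma twoPoint_apply_right {K : ℕ} {i j : Fin K} (hij : i ≠ j) (ε : ℝ) :
    twoPoint i j ε j = 1 - ε := by
  simp [twoPoint, hij.symm]

lemma twoPoint_mem_simplex {K : ℕ} (i j : Fin K) {ε : ℝ} (hε0 : 0 ≤ ε) (hε1 : ε ≤ 1) :
    twoPoint i j ε ∈ simplex K := by
  refine ⟨fun k => ?_, by simp [twoPoint, Finset.sum_add_distrib]⟩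
  simp only [twoPoint, Pi.add_apply, Pi.single_apply]
  split_ifs <;> linarith

lemma ofReal_le_klD_twoPoint {K : ℕ} {i j : Fin K} (hij : i ≠ j) {ε c S : ℝ} (hε0 : 0 < ε)
    (hε1 : ε < 1) (hc : 0 < c) {q : Fin K → ℝ} (hqj : q j = 1 - S) (hqi : c * q i ≤ S) :
    ENNReal.ofReal (ε * (log (ε * c / S) - 1) + S) ≤ klD (twoPoint i j ε) q := by
  have hpi := twoPoint_apply_left hij ε
  have hpj := twoPoint_apply_right hij ε
  unfold klD
  split_ifs with hpos
  swap
  · exact le_top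
  have hqi0 : 0 < q i := hpos i (by rw [hpi]; exact hε0)
  have hqj0 : 0 < q j := hpos j (by rw [hpj]; linarith)
  have hS : 0 < S := lt_of_lt_of_le (by positivity) hqi
  refine ENNReal.ofReal_le_ofReal ?_
  rw [Fintype.sum_eq_add i j hij (fun k hk => by simp [twoPoint, hk.1, hk.2]), hpi, hpj]
  have hi_term : ε * log (ε * c / S) ≤ ε * log (ε / q i) := by
    refine mul_le_mul_of_nonneg_left (log_le_log (by positivity) ?_) hε0.le
    rw [div_le_div_iff₀ hS hqi0]
    nlinarith
  have hj_term : S - ε ≤ (1 - ε) * log ((1 - ε) / q j) := by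
    have h1ε : 0 < 1 - ε := by linarith
    have hlog := mul_le_mul_of_nonneg_left (log_le_sub_one_of_pos (div_pos hqj0 h1ε)) h1ε.le
    rw [mul_sub, mul_div_cancel₀ _ h1ε.ne', mul_one] at hlog
    rw [← inv_div, log_inv]
    linarith
  linarith

/-- estimator-dependent lower bound.
Category `K` is the last index of `Fin K`, and the estimator's output on the
all-`K` sample (so all other counts are zero) plays the role of `p̂⁰`. -/
theorem estimator_dependent_lower_bound (K n : ℕ) (hK : 2 ≤ K)
    (δ : ℝ) (hδ : δ ∈ Set.Ioo (0 : ℝ) 1)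
    (hn : (4/3 : ℝ) * Real.log (1/δ) < (n : ℝ))
    (phat : (Fin n → Fin K) → (Fin K → ℝ)) (hphat : ∀ x, phat x ∈ simplex K) :
    ∃ pstar ∈ simplex K,
      ENNReal.ofReal δ <
        iidMeasure n K pstar
          {x |
            ENNReal.ofReal
              (2 * Real.log (1/δ) / (3 * n) *
                  (Real.log (2 * Real.log (1/δ) * ((K : ℝ) - 1) /
                      (3 * n *
                        ∑ i ∈ Finset.univ.erase (⟨K - 1, by omega⟩ : Fin K),
                          phat (fun _ => (⟨K - 1, by omega⟩ : Fin K)) i)) - 1) +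
                ∑ i ∈ Finset.univ.erase (⟨K - 1, by omega⟩ : Fin K),
                  phat (fun _ => (⟨K - 1, by omega⟩ : Fin K)) i) ≤
            klD pstar (phat x)} := by
  obtain ⟨hδ0, hδ1⟩ := hδ
  have hK' : (1 : ℝ) < K := by exact_mod_cast hK
  set L := log (1 / δ)
  have hL : 0 < L := log_pos (one_lt_one_div hδ0 hδ1)
  have hn0 : (0 : ℝ) < n := by linarith
  set ε := 2 * L / (3 * n) with hε
  have hε0 : 0 < ε := by positivity
  have hε1 : ε < 1 := by rw [hε, div_lt_one (by positivity)]; linarith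
  set last : Fin K := ⟨K - 1, by omega⟩
  set q := phat fun _ => last
  set S := ∑ i ∈ Finset.univ.erase last, q i
  have hqlast : q last = 1 - S := by
    linarith [Finset.add_sum_erase Finset.univ q (Finset.mem_univ last), (hphat fun _ => last).2]
  obtain ⟨i₀, hi₀, hqi₀⟩ := Fin.exists_ne_mul_le_sum_erase hK last q
  refine ⟨twoPoint i₀ last ε, twoPoint_mem_simplex _ _ hε0.le hε1.le, ?_⟩
  have hδ_eq : δ = exp (-L) := by rw [exp_neg, exp_log (by positivity), one_div, inv_inv]
  calc ENNReal.ofReal δ < ENNReal.ofReal (twoPoint i₀ last ε last ^ n) := by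
        rw [hδ_eq, twoPoint_apply_right hi₀]
        exact ENNReal.ofReal_lt_ofReal_iff'.2 ⟨exp_neg_lt_one_sub_pow hL hn, by positivity⟩
    _ ≤ _ := by
        refine ofReal_pow_le_iidMeasure_of_const_mem _
          (by rw [twoPoint_apply_right hi₀]; linarith) ?_
        have harg : 2 * L * ((K : ℝ) - 1) / (3 * n * S) = ε * (K - 1) / S := by ring
        rw [Set.mem_ofPred_eq, harg]
        exact ofReal_le_klD_twoPoint hi₀ hε0 hε1 (sub_pos.2 hK') hqlast hqi₀
end

section
/- Let P_1,…,P_M be probability distributions on [K], let P_j^n denote the law of n i.i.d. samples from P_j, and let δ ∈ [0,1]. A weak hypothesis test is a measurable function Ψ : [K]^n → {1,…,M}, interpreted as identifying the single hypothesis believed NOT to be true; it errs on P_j exactly when Ψ = j. Suppose inf_Ψ max_j P_j^n(Ψ = j) > δ, where the infimum is over all weak hypothesis tests. Then inf_{P̂} max_j P_j^n( KL(P_j ‖ P̂) ≥ s_n ) > δ for s_n = min_{P ∈ Δ^K} max_j KL(P_j ‖ P), where the infimum is over all estimators P̂, i.e. all measurable maps from [K]^n to Δ^K. -/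
open scoped ENNReal
open MeasureTheory

/- An estimator `p̂` yields the weak test that rejects a hypothesis `j` maximising
`KL(P_j ‖ p̂)`. That maximum is at least the minimax radius `s_n`, so whenever the test errs
on `P_j` the estimator's loss under `P_j` is at least `s_n`; the estimator's worst-case
failure probability therefore dominates the test's, which exceeds `δ`. -/

theorem iInf_iSup_measure_eq_le_iSup_measure_of_forall_exists {ι Ω : Type*} [MeasurableSpace Ω]
    (μ : ι → Measure Ω) (E : ι → Ω → Prop) (hE : ∀ ω, ∃ j, E j ω) :
    ⨅ Ψ : Ω → ι, ⨆ j, μ j {ω | Ψ ω = j} ≤ ⨆ j, μ j {ω | E j ω} := by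
  choose Ψ hΨ using hE
  refine iInf_le_of_le Ψ (iSup_mono fun j => measure_mono ?_)
  rintro ω rfl
  exact hΨ ω

theorem reduction_to_weak_testing_general (K n M : ℕ) (hM : 1 ≤ M)
    (P : Fin M → (Fin K → ℝ))
    (δ : ℝ)
    (htest : ENNReal.ofReal δ <
      ⨅ Ψ : (Fin n → Fin K) → Fin M, ⨆ j, iidMeasure n K (P j) {x | Ψ x = j}) :
    ENNReal.ofReal δ <
      ⨅ phat : {f : (Fin n → Fin K) → (Fin K → ℝ) // ∀ x, f x ∈ simplex K},
        ⨆ j, iidMeasure n K (P j)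
          {x | (⨅ q : {q : Fin K → ℝ // q ∈ simplex K}, ⨆ j', klD (P j') q.val) ≤
            klD (P j) (phat.val x)} := by
  have : Nonempty (Fin M) := ⟨⟨0, hM⟩⟩
  refine htest.trans_le (le_iInf fun phat =>
    iInf_iSup_measure_eq_le_iSup_measure_of_forall_exists _ _ fun x => ?_)
  obtain ⟨j, hj⟩ := exists_eq_ciSup_of_finite (f := fun j => klD (P j) (phat.val x))
  exact ⟨j, hj ▸ iInf_le (fun q : {q // q ∈ simplex K} => ⨆ j', klD (P j') q.val)
    ⟨phat.val x, phat.property x⟩⟩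

/-- reduction of estimation to weak hypothesis testing. -/
theorem reduction_to_weak_testing (K n M : ℕ) (hK : 2 ≤ K) (hM : 1 ≤ M)
    (P : Fin M → (Fin K → ℝ)) (hP : ∀ j, P j ∈ simplex K)
    (δ : ℝ) (hδ : δ ∈ Set.Icc (0 : ℝ) 1)
    (htest : ENNReal.ofReal δ <
      ⨅ Ψ : (Fin n → Fin K) → Fin M, ⨆ j, iidMeasure n K (P j) {x | Ψ x = j}) :
    ENNReal.ofReal δ <
      ⨅ phat : {f : (Fin n → Fin K) → (Fin K → ℝ) // ∀ x, f x ∈ simplex K},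
        ⨆ j, iidMeasure n K (P j)
          {x | (⨅ q : {q : Fin K → ℝ // q ∈ simplex K}, ⨆ j', klD (P j') q.val) ≤
            klD (P j) (phat.val x)} :=
  reduction_to_weak_testing_general K n M hM P δ htest
end

section
/- Let p, q, r ∈ Δ^K with q(i) > 0 and r(i) > 0 for all i ∈ [K], and let V ≥ 1 satisfy r(i)/q(i) ≤ V for all i ∈ [K]. Then ∑_{i=1}^K p(i)·( log(r(i)/q(i)) )² ≤ (2 + log V)·( ∑_{i=1}^K p(i)·log(r(i)/q(i)) + ∑_{i=1}^K p(i)·q(i)/r(i) − 1 ). -/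
open scoped ENNReal
open MeasureTheory

/-! With `t = log (r i / q i) ≤ L = log V`, the summand inequality is
`t ^ 2 ≤ (2 + L) * (t + exp (-t) - 1)`, and averaging it against `p` gives the theorem.
For `t ≤ 0` this is the Taylor bound `exp u ≥ 1 + u + u ^ 2 / 2` at `u = -t`;
for `t > 0` it reduces to the Padé-type bound `(2 + t) * exp (-t) ≥ 2 - t`. -/

open Real

lemma two_sub_le_two_add_mul_exp_neg {s : ℝ} (hs : 0 ≤ s) : 2 - s ≤ (2 + s) * exp (-s) := by
  have hmono : Monotone fun s : ℝ => (2 + s) * exp (-s) + s := by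
    refine monotone_of_hasDerivAt_nonneg (f' := fun s => 1 - (1 + s) * exp (-s)) (fun x => ?_)
      (fun x => ?_)
    · have hexp : HasDerivAt (fun s : ℝ => exp (-s)) (-exp (-x)) x := by
        simpa using (hasDerivAt_neg x).exp
      refine ((((hasDerivAt_id' x).const_add 2).mul hexp).add (hasDerivAt_id' x)).congr_deriv ?_
      ring
    · have h := mul_le_mul_of_nonneg_right (add_one_le_exp x) (exp_nonneg (-x))
      rw [← exp_add, add_neg_cancel, exp_zero] at h
      simp only [Pi.zero_apply, sub_nonneg]
      linarith
  simpa using hmono hs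

lemma sq_le_mul_add_exp_neg_sub_one {t L : ℝ} (hL : 0 ≤ L) (htL : t ≤ L) :
    t ^ 2 ≤ (2 + L) * (t + exp (-t) - 1) := by
  have hgap : 0 ≤ t + exp (-t) - 1 := by linarith [add_one_le_exp (-t)]
  rcases le_or_gt t 0 with ht | ht
  · have h := quadratic_le_exp_of_nonneg (neg_nonneg.mpr ht)
    nlinarith
  · have h := two_sub_le_two_add_mul_exp_neg ht.le
    calc t ^ 2 ≤ (2 + t) * (t + exp (-t) - 1) := by nlinarith
      _ ≤ (2 + L) * (t + exp (-t) - 1) := by gcongr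

theorem generalized_yang_barron_general (K : ℕ) (p q r : Fin K → ℝ)
    (hp : p ∈ simplex K)
    (hqpos : ∀ i, 0 < q i) (hrpos : ∀ i, 0 < r i)
    (V : ℝ) (hV : 1 ≤ V) (hVr : ∀ i, r i / q i ≤ V) :
    ∑ i, p i * (Real.log (r i / q i)) ^ 2 ≤
      (2 + Real.log V) *
        (∑ i, p i * Real.log (r i / q i) + ∑ i, p i * (q i / r i) - 1) := by
  have hsummand (i : Fin K) : (Real.log (r i / q i)) ^ 2 ≤
      (2 + Real.log V) * (Real.log (r i / q i) + q i / r i - 1) := by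
    have hratio : 0 < r i / q i := div_pos (hrpos i) (hqpos i)
    have hexp : exp (-Real.log (r i / q i)) = q i / r i := by
      rw [← log_inv, exp_log (inv_pos.mpr hratio), inv_div]
    simpa only [hexp] using
      sq_le_mul_add_exp_neg_sub_one (log_nonneg hV) (log_le_log hratio (hVr i))
  calc ∑ i, p i * (Real.log (r i / q i)) ^ 2
      ≤ ∑ i, p i * ((2 + Real.log V) * (Real.log (r i / q i) + q i / r i - 1)) :=
        Finset.sum_le_sum fun i _ => mul_le_mul_of_nonneg_left (hsummand i) (hp.1 i)
    _ = (2 + Real.log V) * ∑ i, (p i * Real.log (r i / q i) + p i * (q i / r i) - p i) := by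
        rw [Finset.mul_sum]
        exact Finset.sum_congr rfl fun i _ => by ring
    _ = (2 + Real.log V) *
        (∑ i, p i * Real.log (r i / q i) + ∑ i, p i * (q i / r i) - 1) := by
        rw [Finset.sum_sub_distrib, Finset.sum_add_distrib, hp.2]

/-- generalized Yang–Barron inequality. -/
theorem generalized_yang_barron (K : ℕ) (hK : 2 ≤ K) (p q r : Fin K → ℝ)
    (hp : p ∈ simplex K) (hq : q ∈ simplex K) (hr : r ∈ simplex K)
    (hqpos : ∀ i, 0 < q i) (hrpos : ∀ i, 0 < r i)
    (V : ℝ) (hV : 1 ≤ V) (hVr : ∀ i, r i / q i ≤ V) :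
    ∑ i, p i * (Real.log (r i / q i)) ^ 2 ≤
      (2 + Real.log V) *
        (∑ i, p i * Real.log (r i / q i) + ∑ i, p i * (q i / r i) - 1) :=
  generalized_yang_barron_general K p q r hp hqpos hrpos V hV hVr
end

section
/- Let (N_1,…,N_K) be distributed as Multinomial(n, p*(1), …, p*(K)) for p* ∈ Δ^K, and for each i let Ñ_i be independent random variables with Ñ_i ~ Binomial(n, min{1, 3·p*(i)}). Let R ⊆ [K] satisfy ∑_{i ∉ R} p*(i) ≥ 1/3. Then for any real thresholds b_1,…,b_K ≥ 0 and any z > 0, P( ∑_{i ∈ R} 1[N_i ≥ b_i] ≥ z ) ≤ P( ∑_{i ∈ R} 1[Ñ_i ≥ b_i] ≥ z ). -/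
open scoped ENNReal
open MeasureTheory

/-- The multinomial distribution: the joint law of the category counts of `n` i.i.d.
draws from `p` on `Fin K`. -/
noncomputable def multinomialM (n K : ℕ) (p : Fin K → ℝ) : Measure (Fin K → ℕ) :=
  Measure.map (fun x i => countTo x n i) (iidMeasure n K p)

/-- The joint law of `K` independent binomial random variables, the `i`-th having
`n` trials and success probability `q i`. -/
noncomputable def binPi (n K : ℕ) (q : Fin K → ℝ) : Measure (Fin K → ℕ) :=
  ∑ c : Fin K → Fin (n + 1),
    (∏ i, ENNReal.ofReal ((n.choose (c i)) * q i ^ (c i : ℕ) * (1 - q i) ^ (n - (c i : ℕ)))) •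
      Measure.dirac (fun i => ((c i : ℕ)))

/-!
Both probabilities are expectations of the indicator `f` of an up-set of count vectors that
only looks at the coordinates in `R`. Going from `n` to `n + 1` draws, the multinomial vector
gains a unit vector `e_J` with `J ~ p`, while the binomial vector gains an independent vector of
Bernoulli(`q i`) coordinates. Conditionally on the first `n` draws, and by induction, it
therefore suffices to show that `e_J`, seen on `R`, is stochastically dominated by the Bernoulli
vector on `R`. Peeling off one coordinate `i ∈ R` at a time, this reduces to
`p i ≤ (1 - p(R) + p i) * q i`, which holds for `q i = min 1 (3 * p i)` because
`1 - p(R) ≥ 1/3`.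
-/

open Finset

section Finset

variable {ι : Type*} [DecidableEq ι]

lemma sum_single_one_apply (T : Finset ι) (i : ι) :
    (∑ j ∈ T, Pi.single j 1 : ι → ℕ) i = if i ∈ T then 1 else 0 := by
  simp [Finset.sum_apply, Finset.sum_pi_single]

lemma sum_powerset_prod_mul_prod_ite (q a b : ι → ℝ) (A : Finset ι) :
    ∑ T ∈ A.powerset, ((∏ i ∈ T, q i) * ∏ i ∈ A \ T, (1 - q i)) *
        ∏ i ∈ A, (if i ∈ T then a i else b i) =
      ∏ i ∈ A, (q i * a i + (1 - q i) * b i) := by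
  rw [prod_add]
  refine sum_congr rfl fun T hT => ?_
  rw [prod_ite, filter_mem_eq_inter, inter_eq_right.mpr (mem_powerset.mp hT),
    filter_notMem_eq_sdiff, prod_mul_distrib, prod_mul_distrib]
  ring

lemma sum_piFinset_range {M : Type*} [Fintype ι] [AddCommMonoid M] (m : ℕ)
    (F : (ι → ℕ) → M) :
    ∑ d ∈ Fintype.piFinset fun _ => range m, F d = ∑ c : ι → Fin m, F fun i => c i :=
  sum_bij' (fun d hd i => ⟨d i, mem_range.mp (Fintype.mem_piFinset.mp hd i)⟩)
    (fun c _ i => c i) (fun _ _ => mem_univ _) (fun c _ => by simp) (fun _ _ => rfl)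
    (fun _ _ => rfl) (fun _ _ => rfl)

lemma sum_piFinset_range_add_sum_single [Fintype ι] {n : ℕ} {w : ι → ℕ → ℝ}
    (hw : ∀ i, w i (n + 1) = 0) (T : Finset ι) (F : (ι → ℕ) → ℝ) :
    ∑ c ∈ Fintype.piFinset fun _ => range (n + 1),
        (∏ i, w i (c i)) * F (c + ∑ i ∈ T, Pi.single i 1) =
      ∑ d ∈ Fintype.piFinset fun _ => range (n + 2),
        (∏ i, if i ∈ T then (if d i = 0 then 0 else w i (d i - 1)) else w i (d i)) * F d := by
  refine sum_of_injOn (· + ∑ i ∈ T, Pi.single i 1 : (ι → ℕ) → ι → ℕ)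
    (add_left_injective _).injOn ?_ ?_ ?_
  · intro c hc
    simp only [Fintype.coe_piFinset, Set.mem_pi, Set.mem_univ, coe_range, Set.mem_Iio,
      forall_const] at hc ⊢
    intro i
    have := hc i
    rw [Pi.add_apply, sum_single_one_apply]
    split_ifs <;> omega
  · intro d hd hdc
    by_contra hne
    have hfac := prod_ne_zero_iff.mp (left_ne_zero_of_mul hne)
    simp only [Fintype.mem_piFinset, mem_range] at hd
    refine hdc ⟨(d - ∑ i ∈ T, Pi.single i 1 : ι → ℕ), ?_, ?_⟩
    · simp only [Fintype.coe_piFinset, Set.mem_pi, Set.mem_univ, coe_range, Set.mem_Iio,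
        forall_const]
      intro i
      have hi := hfac i (mem_univ i)
      have := hd i
      rw [Pi.sub_apply, sum_single_one_apply]
      by_cases hiT : i ∈ T
      · simp only [hiT, if_true]; omega
      · simp only [hiT, if_false] at hi ⊢
        have : d i ≠ n + 1 := fun h => hi (by rw [h]; exact hw i)
        omega
    · funext i
      have hi := hfac i (mem_univ i)
      simp only [Pi.add_apply, Pi.sub_apply, sum_single_one_apply]
      split_ifs at hi ⊢ <;> first | omega | simp at hi
  · intro c _
    congr 1
    refine prod_congr rfl fun i _ => ?_
    rw [Pi.add_apply, sum_single_one_apply]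
    split_ifs <;> simp_all

end Finset

section Bernoulli

variable {ι : Type*} [DecidableEq ι]

noncomputable def bernoulliExp (q : ι → ℝ) (A : Finset ι) (G : (ι → ℕ) → ℝ) : ℝ :=
  ∑ T ∈ A.powerset, ((∏ i ∈ T, q i) * ∏ i ∈ A \ T, (1 - q i)) * G (∑ i ∈ T, Pi.single i 1)

lemma bernoulliExp_insert (q : ι → ℝ) {A : Finset ι} {i : ι} (hi : i ∉ A) (G : (ι → ℕ) → ℝ) :
    bernoulliExp q (insert i A) G =
      (1 - q i) * bernoulliExp q A G + q i * bernoulliExp q A (fun v => G (Pi.single i 1 + v)) := by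
  rw [bernoulliExp, sum_powerset_insert hi, bernoulliExp, bernoulliExp, mul_sum, mul_sum]
  congr 1 <;> refine sum_congr rfl fun T hT => ?_ <;> have hTA := mem_powerset.mp hT
  · rw [insert_sdiff_of_notMem _ (fun h => hi (hTA h)),
      prod_insert (fun h => hi (mem_sdiff.mp h).1)]
    ring
  · have hiT : i ∉ T := fun h => hi (hTA h)
    rw [insert_sdiff_insert, sdiff_insert_of_notMem hi, prod_insert hiT, sum_insert hiT]
    ring

lemma bernoulliExp_union_of_forall_add_single (q : ι → ℝ) {A B : Finset ι} (hAB : Disjoint A B)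
    {G : (ι → ℕ) → ℝ} (hG : ∀ i ∈ B, ∀ v, G (Pi.single i 1 + v) = G v) :
    bernoulliExp q (A ∪ B) G = bernoulliExp q A G := by
  induction B using Finset.induction_on with
  | empty => simp
  | insert i B hiB ih =>
    have hiAB : i ∉ A ∪ B := by
      simp [hiB, disjoint_left.mp hAB.symm (mem_insert_self i B)]
    rw [union_insert, bernoulliExp_insert q hiAB, funext (hG i (mem_insert_self i B)),
      ih (disjoint_insert_right.mp hAB).2 fun j hj => hG j (mem_insert_of_mem hj)]
    ring

/-- The left side is `E[G(e_J)]` for a single draw `J` that equals `i ∈ A` with probability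
`p i` and misses `A` otherwise. -/
lemma sum_mul_add_mul_le_bernoulliExp {q p : ι → ℝ} {A : Finset ι} (hq0 : ∀ i ∈ A, 0 ≤ q i)
    (hq1 : ∀ i ∈ A, q i ≤ 1) (hp : ∀ i ∈ A, 0 ≤ p i) {G : (ι → ℕ) → ℝ} (hG : Monotone G)
    (hpq : ∀ i ∈ A, p i ≤ (1 - ∑ j ∈ A, p j + p i) * q i) :
    ∑ i ∈ A, p i * G (Pi.single i 1) + (1 - ∑ i ∈ A, p i) * G 0 ≤ bernoulliExp q A G := by
  induction A using Finset.induction_on generalizing G with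
  | empty => simp [bernoulliExp]
  | insert i A hiA ih =>
    simp only [forall_mem_insert, sum_insert hiA] at hq0 hq1 hp hpq ⊢
    have hpq' : ∀ j ∈ A, p j ≤ (1 - ∑ k ∈ A, p k + p j) * q j := fun j hj =>
      (hpq.2 j hj).trans (mul_le_mul_of_nonneg_right (by linarith [hp.1]) (hq0.2 j hj))
    have ih₀ := ih hq0.2 hq1.2 hp.2 hG hpq'
    have ih₁ := ih (G := fun v => G (Pi.single i 1 + v)) hq0.2 hq1.2 hp.2
      (fun v w h => hG (add_le_add le_rfl h)) hpq'
    have hshift : ∑ j ∈ A, p j * G (Pi.single j 1) ≤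
        ∑ j ∈ A, p j * G (Pi.single i 1 + Pi.single j 1) :=
      sum_le_sum fun j hj => mul_le_mul_of_nonneg_left (hG le_add_self) (hp.2 j hj)
    have hsingle : G 0 ≤ G (Pi.single i 1) := hG zero_le
    rw [bernoulliExp_insert q hiA, add_zero] at *
    nlinarith [mul_le_mul_of_nonneg_left ih₀ (sub_nonneg.mpr hq1.1),
      mul_le_mul_of_nonneg_left ih₁ hq0.1, mul_le_mul_of_nonneg_left hshift hq0.1,
      mul_le_mul_of_nonneg_right (show p i ≤ (1 - ∑ k ∈ A, p k) * q i by linarith [hpq.1])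
        (sub_nonneg.mpr hsingle)]

end Bernoulli

section Binomial

noncomputable def binomialWeight (n : ℕ) (q : ℝ) (k : ℕ) : ℝ :=
  n.choose k * q ^ k * (1 - q) ^ (n - k)

lemma binomialWeight_nonneg {q : ℝ} (hq0 : 0 ≤ q) (hq1 : q ≤ 1) (n k : ℕ) :
    0 ≤ binomialWeight n q k := by
  have : 0 ≤ 1 - q := sub_nonneg.mpr hq1
  unfold binomialWeight; positivity

lemma binomialWeight_of_lt {n k : ℕ} (q : ℝ) (h : n < k) : binomialWeight n q k = 0 := by
  simp [binomialWeight, Nat.choose_eq_zero_of_lt h]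

lemma binomialWeight_succ (n : ℕ) (q : ℝ) (k : ℕ) :
    binomialWeight (n + 1) q k =
      q * (if k = 0 then 0 else binomialWeight n q (k - 1)) + (1 - q) * binomialWeight n q k := by
  rcases k with _ | k
  · simp [binomialWeight, pow_succ]; ring
  · simp only [binomialWeight, Nat.add_sub_cancel, Nat.choose_succ_succ', Nat.succ_ne_zero,
      if_false]
    rcases lt_or_ge k n with h | h
    · rw [Nat.add_sub_add_right, show n - k = n - (k + 1) + 1 by omega]
      push_cast; ring
    · rw [Nat.choose_eq_zero_of_lt (by omega : n < k + 1)]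
      rcases h.eq_or_lt with rfl | h
      · simp; ring
      · simp [Nat.choose_eq_zero_of_lt h]

variable {ι : Type*} [Fintype ι] [DecidableEq ι]

noncomputable def binomialExp (n : ℕ) (q : ι → ℝ) (f : (ι → ℕ) → ℝ) : ℝ :=
  ∑ c ∈ Fintype.piFinset fun _ => range (n + 1), (∏ i, binomialWeight n (q i) (c i)) * f c

lemma binomialExp_zero (q : ι → ℝ) (f : (ι → ℕ) → ℝ) : binomialExp 0 q f = f 0 := by
  simp [binomialExp, binomialWeight, ← Pi.zero_def]

lemma binomialExp_succ (n : ℕ) (q : ι → ℝ) (f : (ι → ℕ) → ℝ) :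
    binomialExp (n + 1) q f = bernoulliExp q univ fun v => binomialExp n q fun c => f (c + v) := by
  simp only [bernoulliExp, binomialExp,
    sum_piFinset_range_add_sum_single (fun i => binomialWeight_of_lt (q i) n.lt_succ_self),
    mul_sum]
  rw [sum_comm]
  refine sum_congr rfl fun d _ => ?_
  simp only [← mul_assoc, ← sum_mul, sum_powerset_prod_mul_prod_ite, binomialWeight_succ]

lemma binomialExp_mono (n : ℕ) {q : ι → ℝ} (hq0 : ∀ i, 0 ≤ q i) (hq1 : ∀ i, q i ≤ 1)
    {f g : (ι → ℕ) → ℝ} (hfg : f ≤ g) : binomialExp n q f ≤ binomialExp n q g :=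
  sum_le_sum fun c _ => mul_le_mul_of_nonneg_left (hfg c)
    (prod_nonneg fun i _ => binomialWeight_nonneg (hq0 i) (hq1 i) n (c i))

end Binomial

section Multinomial

variable {K : ℕ}

noncomputable def multinomialExp (n : ℕ) (p : Fin K → ℝ) (f : (Fin K → ℕ) → ℝ) : ℝ :=
  ∑ x : Fin n → Fin K, (∏ t, p (x t)) * f (countTo x n)

lemma countTo_cons {n : ℕ} (j : Fin K) (y : Fin n → Fin K) :
    countTo (Fin.cons j y : Fin (n + 1) → Fin K) (n + 1) = countTo y n + Pi.single j 1 := by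
  funext i
  simp only [countTo, Fin.is_lt, true_and, card_filter, Pi.add_apply, Fin.sum_univ_succ,
    Fin.cons_zero, Fin.cons_succ, Pi.single_apply, eq_comm (a := i)]
  ring

lemma multinomialExp_zero (p : Fin K → ℝ) (f : (Fin K → ℕ) → ℝ) :
    multinomialExp 0 p f = f 0 := by
  simp only [multinomialExp, univ_unique, Fin.prod_univ_zero, one_mul, sum_singleton]
  exact congrArg f (funext fun i => by simp [countTo])

lemma multinomialExp_succ (n : ℕ) (p : Fin K → ℝ) (f : (Fin K → ℕ) → ℝ) :
    multinomialExp (n + 1) p f =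
      ∑ j, p j * multinomialExp n p fun c => f (c + Pi.single j 1) := by
  rw [multinomialExp, ← (Fin.consEquiv fun _ => Fin K).sum_comp, Fintype.sum_prod_type]
  refine sum_congr rfl fun j _ => ?_
  rw [multinomialExp, mul_sum]
  refine sum_congr rfl fun y _ => ?_
  change (∏ t, p ((Fin.cons j y : Fin (n + 1) → Fin K) t)) *
    f (countTo (Fin.cons j y : Fin (n + 1) → Fin K) (n + 1)) = _
  rw [countTo_cons, Fin.prod_univ_succ]
  simp only [Fin.cons_zero, Fin.cons_succ]
  ring

lemma multinomialExp_le_binomialExp {p q : Fin K → ℝ} (hp : ∀ i, 0 ≤ p i) (hp1 : ∑ i, p i = 1)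
    (hq0 : ∀ i, 0 ≤ q i) (hq1 : ∀ i, q i ≤ 1) {R : Finset (Fin K)}
    (hpq : ∀ i ∈ R, p i ≤ (1 - ∑ j ∈ R, p j + p i) * q i) (n : ℕ) {f : (Fin K → ℕ) → ℝ}
    (hf : Monotone f) (hfR : ∀ c c', (∀ i ∈ R, c i = c' i) → f c = f c') :
    multinomialExp n p f ≤ binomialExp n q f := by
  induction n generalizing f with
  | zero => rw [multinomialExp_zero, binomialExp_zero]
  | succ n ih =>
    set G : (Fin K → ℕ) → ℝ := fun v => binomialExp n q fun c => f (c + v)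
    have hG : Monotone G := fun v w hvw =>
      binomialExp_mono n hq0 hq1 fun c => hf (add_le_add le_rfl hvw)
    have hGR : ∀ i ∉ R, ∀ v, G (Pi.single i 1 + v) = G v := by
      intro i hi v
      refine congrArg (binomialExp n q) (funext fun c => hfR _ _ fun j hj => ?_)
      simp [ne_of_mem_of_not_mem hj hi]
    calc multinomialExp (n + 1) p f
        = ∑ j, p j * multinomialExp n p fun c => f (c + Pi.single j 1) :=
          multinomialExp_succ n p f
      _ ≤ ∑ j, p j * G (Pi.single j 1) :=
        sum_le_sum fun j _ => mul_le_mul_of_nonneg_left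
          (ih (fun v w h => hf (add_le_add h le_rfl))
            fun c c' h => hfR _ _ fun i hi => by simp [h i hi]) (hp j)
      _ = ∑ j ∈ R, p j * G (Pi.single j 1) + (1 - ∑ j ∈ R, p j) * G 0 := by
        rw [← sum_add_sum_compl R, ← hp1, ← sum_add_sum_compl R p, add_sub_cancel_left, sum_mul]
        congr 1
        refine sum_congr rfl fun j hj => ?_
        rw [← add_zero (Pi.single j 1), hGR j (mem_compl.mp hj)]
      _ ≤ bernoulliExp q R G :=
        sum_mul_add_mul_le_bernoulliExp (fun i _ => hq0 i) (fun i _ => hq1 i) (fun i _ => hp i)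
          hG hpq
      _ = bernoulliExp q (R ∪ Rᶜ) G :=
        (bernoulliExp_union_of_forall_add_single q disjoint_compl_right
          fun i hi => hGR i (mem_compl.mp hi)).symm
      _ = binomialExp (n + 1) q f := by rw [union_compl, binomialExp_succ]

end Multinomial

section Measures

variable {K : ℕ}

lemma sum_smul_dirac_apply {α β : Type*} [Fintype α] [MeasurableSpace β] (w : α → ℝ)
    (hw : ∀ x, 0 ≤ w x) (g : α → β) {A : Set β} (hA : MeasurableSet A) :
    (∑ x, ENNReal.ofReal (w x) • Measure.dirac (g x)) A =
      ENNReal.ofReal (∑ x, w x * A.indicator 1 (g x)) := by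
  have hnonneg : ∀ x, 0 ≤ w x * A.indicator 1 (g x) := fun x =>
    mul_nonneg (hw x) (Set.indicator_nonneg (fun _ _ => zero_le_one) _)
  rw [Measure.finsetSum_apply, ENNReal.ofReal_sum_of_nonneg fun x _ => hnonneg x]
  refine sum_congr rfl fun x _ => ?_
  rw [Measure.smul_apply, Measure.dirac_apply' _ hA, smul_eq_mul, ENNReal.ofReal_mul (hw x)]
  by_cases hx : g x ∈ A <;> simp [hx]

lemma multinomialM_apply (n : ℕ) {p : Fin K → ℝ} (hp : ∀ i, 0 ≤ p i) (A : Set (Fin K → ℕ)) :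
    multinomialM n K p A = ENNReal.ofReal (multinomialExp n p (A.indicator 1)) := by
  simp_rw [multinomialM, Measure.map_apply .of_discrete .of_discrete, iidMeasure,
    ← ENNReal.ofReal_prod_of_nonneg fun _ _ => hp _]
  exact sum_smul_dirac_apply _ (fun x => prod_nonneg fun t _ => hp (x t)) id .of_discrete

lemma binPi_apply (n : ℕ) {q : Fin K → ℝ} (hq0 : ∀ i, 0 ≤ q i) (hq1 : ∀ i, q i ≤ 1)
    (A : Set (Fin K → ℕ)) :
    binPi n K q A = ENNReal.ofReal (binomialExp n q (A.indicator 1)) := by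
  have hw : ∀ c : Fin K → Fin (n + 1), 0 ≤ ∏ i, binomialWeight n (q i) (c i) := fun c =>
    prod_nonneg fun i _ => binomialWeight_nonneg (hq0 i) (hq1 i) _ _
  have hbinPi : binPi n K q = ∑ c : Fin K → Fin (n + 1),
      ENNReal.ofReal (∏ i, binomialWeight n (q i) (c i)) • Measure.dirac fun i => (c i : ℕ) := by
    simp_rw [ENNReal.ofReal_prod_of_nonneg fun i _ => binomialWeight_nonneg (hq0 i) (hq1 i) _ _]
    rfl
  rw [hbinPi, sum_smul_dirac_apply _ hw _ .of_discrete, binomialExp, sum_piFinset_range]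

end Measures

lemma monotone_sum_ite_le {ι : Type*} (R : Finset ι) (b : ι → ℝ) :
    Monotone fun c : ι → ℕ => ∑ i ∈ R, if b i ≤ (c i : ℝ) then (1 : ℝ) else 0 :=
  fun c c' h => sum_le_sum fun i _ => by
    split_ifs with h₁ h₂
    · exact le_rfl
    · exact absurd (h₁.trans (Nat.cast_le.mpr (h i))) h₂
    · exact zero_le_one
    · exact le_rfl

lemma IsUpperSet.monotone_indicator_one {α : Type*} [Preorder α] {A : Set α} (hA : IsUpperSet A) :
    Monotone (A.indicator (1 : α → ℝ)) := fun x y hxy => by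
  by_cases hx : x ∈ A
  · simp [hx, hA hxy hx]
  · simp [hx, Set.indicator_nonneg]

lemma le_add_mul_min_one_three_mul {s x : ℝ} (hs : 1 / 3 ≤ s) (hx : 0 ≤ x) :
    x ≤ (s + x) * min 1 (3 * x) := by
  rcases le_total 1 (3 * x) with h | h
  · rw [min_eq_left h]; linarith
  · rw [min_eq_right h]; nlinarith

open scoped Classical in
theorem multinomial_to_binomial_general (K n : ℕ)
    (pstar : Fin K → ℝ) (hp : pstar ∈ simplex K)
    (R : Finset (Fin K)) (hR : (1/3 : ℝ) ≤ ∑ i ∈ Finset.univ \ R, pstar i)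
    (b : Fin K → ℝ) (z : ℝ) :
    multinomialM n K pstar
        {c | z ≤ ∑ i ∈ R, (if b i ≤ (c i : ℝ) then (1 : ℝ) else 0)} ≤
      binPi n K (fun i => min 1 (3 * pstar i))
        {c | z ≤ ∑ i ∈ R, (if b i ≤ (c i : ℝ) then (1 : ℝ) else 0)} := by
  obtain ⟨hp0, hp1⟩ := hp
  have hq0 : ∀ i, 0 ≤ min 1 (3 * pstar i) := fun i => le_min zero_le_one (by linarith [hp0 i])
  have hq1 : ∀ i, min 1 (3 * pstar i) ≤ 1 := fun i => min_le_left _ _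
  have hrest : ∑ i ∈ Finset.univ \ R, pstar i = 1 - ∑ i ∈ R, pstar i := by
    rw [← hp1, ← sum_sdiff (subset_univ R)]; ring
  have hpq : ∀ i ∈ R, pstar i ≤ (1 - ∑ j ∈ R, pstar j + pstar i) * min 1 (3 * pstar i) :=
    fun i _ => le_add_mul_min_one_three_mul (hrest ▸ hR) (hp0 i)
  rw [multinomialM_apply n hp0, binPi_apply n hq0 hq1]
  refine ENNReal.ofReal_le_ofReal (multinomialExp_le_binomialExp hp0 hp1 hq0 hq1 hpq n
    ((isUpperSet_Ici z).preimage (monotone_sum_ite_le R b)).monotone_indicator_one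
    fun c c' h => ?_)
  exact congrArg ((Set.Ici z).indicator 1) (sum_congr rfl fun i hi => by rw [h i hi])

open scoped Classical in
/-- stochastic comparison of multinomial exceedance counts with
independent binomials. -/
theorem multinomial_to_binomial (K n : ℕ) (hK : 2 ≤ K) (hn : 1 ≤ n)
    (pstar : Fin K → ℝ) (hp : pstar ∈ simplex K)
    (R : Finset (Fin K)) (hR : (1/3 : ℝ) ≤ ∑ i ∈ Finset.univ \ R, pstar i)
    (b : Fin K → ℝ) (hb : ∀ i, 0 ≤ b i) (z : ℝ) (hz : 0 < z) :
    multinomialM n K pstar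
        {c | z ≤ ∑ i ∈ R, (if b i ≤ (c i : ℝ) then (1 : ℝ) else 0)} ≤
      binPi n K (fun i => min 1 (3 * pstar i))
        {c | z ≤ ∑ i ∈ R, (if b i ≤ (c i : ℝ) then (1 : ℝ) else 0)} :=
  multinomial_to_binomial_general K n pstar hp R hR b z
end

section
/- Let (N_1,…,N_K) be distributed as Multinomial(n, p*(1), …, p*(K)) for p* ∈ Δ^K, let p*_min = min_{i ∈ [K]} p*(i), and let R ⊆ [K] satisfy ∑_{i ∉ R} p*(i) ≥ 1/3. Then for every x ≥ 1 and every z ≥ 2·|R|·exp( −(1/4)·x·(3n·p*_min + 1) ), P( ∑_{i ∈ R} 1[ N_i > 3n·p*(i) + x·(3n·p*(i) + 1) ] ≥ z ) ≤ exp(−z/24). -/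
open scoped ENNReal
open MeasureTheory

/-! ### Auxiliary lemmas -/

lemma sum_prod_pi (n K : ℕ) (g : Fin K → ℝ) :
    ∑ x : Fin n → Fin K, ∏ t, g (x t) = (∑ i, g i) ^ n := by
  rw [← Fin.prod_const n (∑ i, g i), Finset.prod_univ_sum]
  simp [Fintype.piFinset_univ]

open scoped Classical in
lemma sum_countTo_nat {n K : ℕ} (S : Finset (Fin K)) (x : Fin n → Fin K) :
    ∑ i ∈ S, countTo x n i = ∑ t : Fin n, (if x t ∈ S then 1 else 0) := by
  have h : ∀ i, countTo x n i = (Finset.univ.filter fun t => x t = i).card := by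
    intro i; simp [countTo, Fin.is_lt]
  simp only [h, Finset.card_filter]
  rw [Finset.sum_comm]
  apply Finset.sum_congr rfl
  intro t _
  simp [Finset.sum_ite_eq]

open scoped Classical in
lemma sum_countTo {n K : ℕ} (S : Finset (Fin K)) (x : Fin n → Fin K) :
    ∑ i ∈ S, (countTo x n i : ℝ) = ∑ t : Fin n, (if x t ∈ S then (1:ℝ) else 0) := by
  rw [← Nat.cast_sum S _, sum_countTo_nat S x, Nat.cast_sum]
  apply Finset.sum_congr rfl
  intro t _
  split <;> simp

open scoped Classical in
/-- Chernoff bound (with `λ = 1`) for the total count in a set `S` of categories. -/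
lemma chernoff (n K : ℕ) (p : Fin K → ℝ) (hp0 : ∀ i, 0 ≤ p i) (hp1 : ∑ i, p i = 1)
    (S : Finset (Fin K)) (T : ℝ) :
    ∑ x ∈ Finset.univ.filter
        (fun x : Fin n → Fin K => T < ∑ i ∈ S, (countTo x n i : ℝ)), ∏ t, p (x t) ≤
      Real.exp (3 * n * (∑ i ∈ S, p i) - T) := by
  set pS := ∑ i ∈ S, p i with hpS
  have hpS0 : 0 ≤ pS := Finset.sum_nonneg fun i _ => hp0 i
  have step1 : ∑ x ∈ Finset.univ.filter
        (fun x : Fin n → Fin K => T < ∑ i ∈ S, (countTo x n i : ℝ)), ∏ t, p (x t) ≤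
      Real.exp (-T) * ∑ x : Fin n → Fin K, ∏ t, (p (x t) * Real.exp (if x t ∈ S then 1 else 0)) := by
    calc ∑ x ∈ Finset.univ.filter
          (fun x : Fin n → Fin K => T < ∑ i ∈ S, (countTo x n i : ℝ)), ∏ t, p (x t)
        ≤ ∑ x ∈ Finset.univ.filter
          (fun x : Fin n → Fin K => T < ∑ i ∈ S, (countTo x n i : ℝ)),
            Real.exp (-T) * ∏ t, (p (x t) * Real.exp (if x t ∈ S then 1 else 0)) := by
          apply Finset.sum_le_sum
          intro x hx
          rw [Finset.mem_filter] at hx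
          have hM : T < ∑ t : Fin n, (if x t ∈ S then (1:ℝ) else 0) := by
            rw [← sum_countTo]; exact hx.2
          have heq : ∏ t, (p (x t) * Real.exp (if x t ∈ S then 1 else 0)) =
              (∏ t, p (x t)) * Real.exp (∑ t : Fin n, (if x t ∈ S then (1:ℝ) else 0)) := by
            rw [Finset.prod_mul_distrib, Real.exp_sum]
          rw [heq, ← mul_assoc, mul_comm (Real.exp (-T)), mul_assoc, ← Real.exp_add]
          nth_rewrite 1 [← mul_one (∏ t, p (x t))]
          apply mul_le_mul_of_nonneg_left _ (Finset.prod_nonneg fun t _ => hp0 _)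
          apply Real.one_le_exp
          linarith
      _ ≤ ∑ x : Fin n → Fin K,
            Real.exp (-T) * ∏ t, (p (x t) * Real.exp (if x t ∈ S then 1 else 0)) := by
          apply Finset.sum_le_sum_of_subset_of_nonneg (Finset.filter_subset _ _)
          intro x _ _
          exact mul_nonneg (Real.exp_nonneg _)
            (Finset.prod_nonneg fun t _ => mul_nonneg (hp0 _) (Real.exp_nonneg _))
      _ = Real.exp (-T) * ∑ x : Fin n → Fin K,
            ∏ t, (p (x t) * Real.exp (if x t ∈ S then 1 else 0)) := by rw [Finset.mul_sum]
  have step2 : ∑ x : Fin n → Fin K, ∏ t, (p (x t) * Real.exp (if x t ∈ S then 1 else 0)) =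
      (1 + (Real.exp 1 - 1) * pS) ^ n := by
    rw [sum_prod_pi n K (fun i => p i * Real.exp (if i ∈ S then 1 else 0))]
    congr 1
    have h1 : ∀ i : Fin K, p i * Real.exp (if i ∈ S then 1 else 0) =
        if i ∈ S then p i * Real.exp 1 else p i := by
      intro i; by_cases h : i ∈ S <;> simp [h]
    simp only [h1]
    rw [Finset.sum_ite, Finset.filter_mem_eq_inter, Finset.univ_inter, ← Finset.sum_mul]
    have h2 : Finset.filter (fun i => i ∉ S) Finset.univ = Finset.univ \ S := by
      ext i; simp
    rw [h2, Finset.sum_sdiff_eq_sub (Finset.subset_univ S), hp1]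
    ring
  have he3 : Real.exp 1 ≤ 3 := by nlinarith [Real.exp_one_lt_d9]
  have hnp : 0 ≤ (n:ℝ) * pS := mul_nonneg (Nat.cast_nonneg n) hpS0
  have step3 : (1 + (Real.exp 1 - 1) * pS) ^ n ≤ Real.exp (3 * n * pS) := by
    have h1 : 1 + (Real.exp 1 - 1) * pS ≤ Real.exp ((Real.exp 1 - 1) * pS) := by
      have := Real.add_one_le_exp ((Real.exp 1 - 1) * pS); linarith
    have h0 : 0 ≤ 1 + (Real.exp 1 - 1) * pS := by
      nlinarith [Real.one_le_exp (zero_le_one (α := ℝ))]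
    calc (1 + (Real.exp 1 - 1) * pS) ^ n ≤ Real.exp ((Real.exp 1 - 1) * pS) ^ n :=
          pow_le_pow_left₀ h0 h1 n
      _ = Real.exp (n * ((Real.exp 1 - 1) * pS)) := by rw [← Real.exp_nat_mul]
      _ ≤ Real.exp (3 * n * pS) := by
          apply Real.exp_le_exp.2
          nlinarith [mul_nonneg hnp (by linarith : (0:ℝ) ≤ 4 - Real.exp 1)]
  calc _ ≤ Real.exp (-T) * (1 + (Real.exp 1 - 1) * pS) ^ n := by rw [← step2]; exact step1
    _ ≤ Real.exp (-T) * Real.exp (3 * n * pS) :=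
        mul_le_mul_of_nonneg_left step3 (Real.exp_nonneg _)
    _ = Real.exp (3 * n * pS - T) := by rw [← Real.exp_add]; ring_nf

open scoped Classical in
/-- Evaluation of the multinomial measure on an arbitrary set. -/
lemma multinomial_apply (n K : ℕ) (p : Fin K → ℝ) (hp0 : ∀ i, 0 ≤ p i)
    (A : Set (Fin K → ℕ)) :
    multinomialM n K p A =
      ENNReal.ofReal (∑ x ∈ Finset.univ.filter
        (fun x : Fin n → Fin K => (fun i => countTo x n i) ∈ A), ∏ t, p (x t)) := by
  have hmeas : Measurable (fun (x : Fin n → Fin K) (i : Fin K) => countTo x n i) :=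
    measurable_of_countable _
  have hA : MeasurableSet A := (Set.to_countable A).measurableSet
  rw [multinomialM, Measure.map_apply hmeas hA, iidMeasure]
  rw [Measure.finset_sum_apply]
  rw [ENNReal.ofReal_sum_of_nonneg (fun x _ => Finset.prod_nonneg (fun t _ => hp0 (x t)))]
  rw [Finset.sum_filter]
  congr 1
  ext x
  rw [Measure.smul_apply, Measure.dirac_apply, smul_eq_mul]
  by_cases hx : (fun i => countTo x n i) ∈ A
  · simp [hx, Set.indicator_of_mem, Set.mem_preimage,
      ENNReal.ofReal_prod_of_nonneg (fun t _ => hp0 (x t))]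
  · simp [hx, Set.indicator_of_notMem, Set.mem_preimage]

set_option maxHeartbeats 1000000 in
open scoped Classical in
/-- tail bound on the number of categories whose multinomial counts are
much larger than their means. -/
theorem multinomial_exceedance_tail (K n : ℕ) (hK : 2 ≤ K) (hn : 1 ≤ n)
    (pstar : Fin K → ℝ) (hp : pstar ∈ simplex K)
    (R : Finset (Fin K)) (hR : (1/3 : ℝ) ≤ ∑ i ∈ Finset.univ \ R, pstar i)
    (x z : ℝ) (hx : 1 ≤ x)
    (hz : 2 * (R.card : ℝ) *
        Real.exp (-(1/4) * x * (3 * n * (⨅ i, pstar i) + 1)) ≤ z) :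
    multinomialM n K pstar
        {c | z ≤ ∑ i ∈ R,
          (if 3 * n * pstar i + x * (3 * n * pstar i + 1) < (c i : ℝ) then (1 : ℝ) else 0)} ≤
      ENNReal.ofReal (Real.exp (-z / 24)) := by
  obtain ⟨hp0, hp1⟩ := hp
  have hKpos : 0 < K := by omega
  haveI : Nonempty (Fin K) := ⟨⟨0, hKpos⟩⟩
  set pmin : ℝ := ⨅ i, pstar i with hpmin_def
  have hpmin_le : ∀ i, pmin ≤ pstar i := fun i => ciInf_le (Finite.bddBelow_range _) i
  have hpmin0 : 0 ≤ pmin := le_ciInf fun i => hp0 i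
  set a : ℝ := 3 * n * pmin + 1 with ha_def
  have ha1 : 1 ≤ a := by
    have : 0 ≤ 3 * (n:ℝ) * pmin := by positivity
    simp only [ha_def]; linarith
  have hx0 : (0:ℝ) < x := lt_of_lt_of_le one_pos hx
  set q : ℝ := Real.exp (-(1/4) * x * a) with hq_def
  set q4 : ℝ := Real.exp (-(x * a)) with hq4_def
  have hq0 : 0 < q := Real.exp_pos _
  have hq40 : 0 < q4 := Real.exp_pos _
  have hq4q : q4 ≤ q := by
    apply Real.exp_le_exp.2
    nlinarith
  have hz0 : 0 ≤ z := le_trans (by positivity) hz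
  set τ : Fin K → ℝ := fun i => 3 * n * pstar i + x * (3 * n * pstar i + 1) with hτ_def
  -- reduce to a real inequality
  rw [multinomial_apply n K pstar hp0]
  apply ENNReal.ofReal_le_ofReal
  -- notation
  set W : (Fin n → Fin K) → ℝ := fun y => ∏ t, pstar (y t) with hW_def
  have hW0 : ∀ y, 0 ≤ W y := fun y => Finset.prod_nonneg fun t _ => hp0 (y t)
  set ind : Fin K → (Fin n → Fin K) → ℝ :=
    fun i y => if τ i < (countTo y n i : ℝ) then 1 else 0 with hind_def
  have hind0 : ∀ i y, 0 ≤ ind i y := by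
    intro i y; simp only [hind_def]; split <;> norm_num
  have hfilter_eq : (Finset.univ.filter
      (fun y : Fin n → Fin K => (fun i => countTo y n i) ∈
        {c : Fin K → ℕ | z ≤ ∑ i ∈ R,
          (if 3 * n * pstar i + x * (3 * n * pstar i + 1) < (c i : ℝ) then (1 : ℝ) else 0)})) =
      Finset.univ.filter (fun y : Fin n → Fin K => z ≤ ∑ i ∈ R, ind i y) := by
    apply Finset.filter_congr
    intro y _
    simp [Set.mem_setOf_eq, hind_def, hτ_def]
  rw [hfilter_eq]
  -- Step A/B : Markov with base 2
  have stepB : ∑ y ∈ Finset.univ.filter (fun y : Fin n → Fin K => z ≤ ∑ i ∈ R, ind i y), W y ≤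
      (2:ℝ) ^ (-z) * ∑ y : Fin n → Fin K, W y * ∏ i ∈ R, (1 + ind i y) := by
    calc ∑ y ∈ Finset.univ.filter (fun y : Fin n → Fin K => z ≤ ∑ i ∈ R, ind i y), W y
        ≤ ∑ y ∈ Finset.univ.filter (fun y : Fin n → Fin K => z ≤ ∑ i ∈ R, ind i y),
            (2:ℝ) ^ (-z) * (W y * ∏ i ∈ R, (1 + ind i y)) := by
          apply Finset.sum_le_sum
          intro y hy
          rw [Finset.mem_filter] at hy
          set Ey : Finset (Fin K) := R.filter (fun i => τ i < (countTo y n i : ℝ)) with hEy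
          have hcard : ∑ i ∈ R, ind i y = (Ey.card : ℝ) := by
            simp only [hind_def, hEy, Finset.card_filter]
            push_cast
            rfl
          have hprod : ∏ i ∈ R, (1 + ind i y) = (2:ℝ) ^ Ey.card := by
            have : ∀ i ∈ R, (1 + ind i y) =
                if τ i < (countTo y n i : ℝ) then (2:ℝ) else 1 := by
              intro i _; simp only [hind_def]; split <;> norm_num
            rw [Finset.prod_congr rfl this, Finset.prod_ite, Finset.prod_const,
              Finset.prod_const, one_pow, mul_one]
          have hzc : z ≤ (Ey.card : ℝ) := by rw [← hcard]; exact hy.2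
          have key : (1:ℝ) ≤ (2:ℝ) ^ (-z) * (2:ℝ) ^ Ey.card := by
            have h1 : ((2:ℝ) ^ Ey.card : ℝ) = (2:ℝ) ^ ((Ey.card : ℝ)) := by
              rw [Real.rpow_natCast]
            rw [h1, ← Real.rpow_add two_pos]
            have h2 : (0:ℝ) ≤ -z + (Ey.card : ℝ) := by linarith
            calc (1:ℝ) = (2:ℝ) ^ (0:ℝ) := by rw [Real.rpow_zero]
              _ ≤ (2:ℝ) ^ (-z + (Ey.card:ℝ)) :=
                  (Real.rpow_le_rpow_left_iff one_lt_two).2 h2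
          calc W y = W y * 1 := by ring
            _ ≤ W y * ((2:ℝ) ^ (-z) * (2:ℝ) ^ Ey.card) :=
                mul_le_mul_of_nonneg_left key (hW0 y)
            _ = (2:ℝ) ^ (-z) * (W y * ∏ i ∈ R, (1 + ind i y)) := by rw [hprod]; ring
      _ ≤ ∑ y : Fin n → Fin K, (2:ℝ) ^ (-z) * (W y * ∏ i ∈ R, (1 + ind i y)) := by
          apply Finset.sum_le_sum_of_subset_of_nonneg (Finset.filter_subset _ _)
          intro y _ _
          have h1 : (0:ℝ) ≤ ∏ i ∈ R, (1 + ind i y) :=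
            Finset.prod_nonneg fun i _ => by have := hind0 i y; linarith
          have h2 : (0:ℝ) ≤ (2:ℝ) ^ (-z) := (Real.rpow_pos_of_pos two_pos _).le
          exact mul_nonneg h2 (mul_nonneg (hW0 y) h1)
      _ = (2:ℝ) ^ (-z) * ∑ y : Fin n → Fin K, W y * ∏ i ∈ R, (1 + ind i y) := by
          rw [Finset.mul_sum]
  -- Step C : expand the product over subsets
  have stepC : ∑ y : Fin n → Fin K, W y * ∏ i ∈ R, (1 + ind i y) =
      ∑ S ∈ R.powerset, ∑ y : Fin n → Fin K, W y * ∏ i ∈ S, ind i y := by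
    rw [Finset.sum_comm]
    apply Finset.sum_congr rfl
    intro y _
    have h1 : ∏ i ∈ R, (1 + ind i y) = ∏ i ∈ R, (ind i y + 1) := by
      apply Finset.prod_congr rfl; intro i _; ring
    rw [h1, Finset.prod_add]
    rw [Finset.mul_sum]
    apply Finset.sum_congr rfl
    intro S _
    simp
  -- Step D : per-subset Chernoff bound
  have stepD : ∀ S ∈ R.powerset,
      ∑ y : Fin n → Fin K, W y * ∏ i ∈ S, ind i y ≤ q4 ^ S.card := by
    intro S hS
    have hprod : ∀ y : Fin n → Fin K, ∏ i ∈ S, ind i y =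
        if (∀ i ∈ S, τ i < (countTo y n i : ℝ)) then (1:ℝ) else 0 := by
      intro y
      simp only [hind_def]
      by_cases h : ∀ i ∈ S, τ i < (countTo y n i : ℝ)
      · rw [if_pos h]
        exact Finset.prod_eq_one fun i hi => if_pos (h i hi)
      · rw [if_neg h]
        push_neg at h
        obtain ⟨i, hi, hle⟩ := h
        exact Finset.prod_eq_zero hi (if_neg (not_lt.2 hle))
    have hsum : ∑ y : Fin n → Fin K, W y * ∏ i ∈ S, ind i y =
        ∑ y ∈ Finset.univ.filter
          (fun y : Fin n → Fin K => ∀ i ∈ S, τ i < (countTo y n i : ℝ)), W y := by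
      rw [Finset.sum_filter]
      apply Finset.sum_congr rfl
      intro y _
      rw [hprod y]
      by_cases h : ∀ i ∈ S, τ i < (countTo y n i : ℝ) <;> simp [h]
    rw [hsum]
    rcases S.eq_empty_or_nonempty with hSe | hSne
    · subst hSe
      simp only [Finset.card_empty, pow_zero]
      have : ∑ y ∈ Finset.univ.filter
          (fun y : Fin n → Fin K => ∀ i ∈ (∅ : Finset (Fin K)), τ i < (countTo y n i : ℝ)), W y =
          ∑ y : Fin n → Fin K, W y := by
        apply Finset.sum_congr _ (fun _ _ => rfl)
        simp
      rw [this, hW_def, sum_prod_pi n K pstar, hp1, one_pow]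
    · set pS := ∑ i ∈ S, pstar i with hpS_def
      have hpS0 : 0 ≤ pS := Finset.sum_nonneg fun i _ => hp0 i
      set T : ℝ := ∑ i ∈ S, τ i with hT_def
      have hsub : Finset.univ.filter
          (fun y : Fin n → Fin K => ∀ i ∈ S, τ i < (countTo y n i : ℝ)) ⊆
          Finset.univ.filter
          (fun y : Fin n → Fin K => T < ∑ i ∈ S, (countTo y n i : ℝ)) := by
        intro y hy
        rw [Finset.mem_filter] at hy ⊢
        exact ⟨hy.1, Finset.sum_lt_sum_of_nonempty hSne hy.2⟩
      have hch := chernoff n K pstar hp0 hp1 S T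
      have hTval : T = 3 * n * pS + x * (3 * n * pS + S.card) := by
        simp only [hT_def, hτ_def, hpS_def, Finset.sum_add_distrib, ← Finset.mul_sum,
          Finset.sum_const, nsmul_eq_mul, mul_one]
      calc ∑ y ∈ Finset.univ.filter
            (fun y : Fin n → Fin K => ∀ i ∈ S, τ i < (countTo y n i : ℝ)), W y
          ≤ ∑ y ∈ Finset.univ.filter
            (fun y : Fin n → Fin K => T < ∑ i ∈ S, (countTo y n i : ℝ)), W y :=
            Finset.sum_le_sum_of_subset_of_nonneg hsub (fun y _ _ => hW0 y)
        _ ≤ Real.exp (3 * n * pS - T) := hch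
        _ ≤ q4 ^ S.card := by
            rw [hq4_def, ← Real.exp_nat_mul]
            apply Real.exp_le_exp.2
            have hmin : (S.card : ℝ) * pmin ≤ pS := by
              rw [hpS_def]
              calc (S.card : ℝ) * pmin = ∑ _i ∈ S, pmin := by
                    rw [Finset.sum_const, nsmul_eq_mul]
                _ ≤ ∑ i ∈ S, pstar i := Finset.sum_le_sum fun i _ => hpmin_le i
            rw [hTval]
            have hcard0 : (0:ℝ) ≤ (S.card : ℝ) := Nat.cast_nonneg _
            have hkey : (S.card : ℝ) * (x * a) ≤ x * (3 * n * pS + S.card) := by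
              simp only [ha_def]
              have h1 : (S.card : ℝ) * (3 * n * pmin) ≤ 3 * n * pS := by
                have hn0 : (0:ℝ) ≤ 3 * (n:ℝ) := by positivity
                calc (S.card : ℝ) * (3 * n * pmin) = 3 * n * ((S.card : ℝ) * pmin) := by ring
                  _ ≤ 3 * n * pS := mul_le_mul_of_nonneg_left hmin hn0
              nlinarith
            nlinarith
  -- Step E : sum the geometric bounds
  have stepE : ∑ S ∈ R.powerset, q4 ^ S.card = (q4 + 1) ^ R.card := by
    have := Finset.prod_add (fun _ : Fin K => q4) (fun _ : Fin K => 1) R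
    rw [Finset.prod_const] at this
    rw [this]
    apply Finset.sum_congr rfl
    intro S _
    simp
  -- Step F : final exponential comparison
  have hrq : (R.card : ℝ) * q ≤ z / 2 := by
    rw [hq_def]
    simp only [hq_def] at hz ⊢
    nlinarith [hz]
  have stepF : (q4 + 1) ^ R.card ≤ Real.exp (z / 2) := by
    have h1 : q4 + 1 ≤ Real.exp q4 := Real.add_one_le_exp q4
    have h0 : (0:ℝ) ≤ q4 + 1 := by linarith
    calc (q4 + 1) ^ R.card ≤ Real.exp q4 ^ R.card := pow_le_pow_left₀ h0 h1 _
      _ = Real.exp ((R.card : ℝ) * q4) := by rw [← Real.exp_nat_mul]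
      _ ≤ Real.exp (z / 2) := by
          apply Real.exp_le_exp.2
          have : (R.card : ℝ) * q4 ≤ (R.card : ℝ) * q :=
            mul_le_mul_of_nonneg_left hq4q (Nat.cast_nonneg _)
          linarith
  -- put everything together
  calc ∑ y ∈ Finset.univ.filter (fun y : Fin n → Fin K => z ≤ ∑ i ∈ R, ind i y), W y
      ≤ (2:ℝ) ^ (-z) * ∑ y : Fin n → Fin K, W y * ∏ i ∈ R, (1 + ind i y) := stepB
    _ = (2:ℝ) ^ (-z) * ∑ S ∈ R.powerset, ∑ y : Fin n → Fin K, W y * ∏ i ∈ S, ind i y := by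
        rw [stepC]
    _ ≤ (2:ℝ) ^ (-z) * ∑ S ∈ R.powerset, q4 ^ S.card := by
        apply mul_le_mul_of_nonneg_left _ (Real.rpow_pos_of_pos two_pos _).le
        exact Finset.sum_le_sum stepD
    _ = (2:ℝ) ^ (-z) * (q4 + 1) ^ R.card := by rw [stepE]
    _ ≤ (2:ℝ) ^ (-z) * Real.exp (z / 2) :=
        mul_le_mul_of_nonneg_left stepF (Real.rpow_pos_of_pos two_pos _).le
    _ ≤ Real.exp (-z / 24) := by
        rw [Real.rpow_def_of_pos two_pos, ← Real.exp_add]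
        apply Real.exp_le_exp.2
        have hlog2 : (0.6931471803 : ℝ) < Real.log 2 := Real.log_two_gt_d9
        nlinarith [mul_nonneg hz0 (by nlinarith : (0:ℝ) ≤ Real.log 2 - 13/24)]
end

section
/- Let p* ∈ Δ^K, let c_1,…,c_K be nonnegative integers with ∑_{i=1}^K c_i = n, and let γ_1,…,γ_K ≥ 0. Define p̄(i) = c_i/n and p̃(i) = (c_i + γ_i)/(n + ∑_{j=1}^K γ_j). Then h²(p*, p̃) ≤ h²(p*, p̄) + (∑_{i=1}^K γ_i)/(2n), where h²(p, q) = 1 − ∑_{i=1}^K √(p(i)·q(i)) is the halved squared Hellinger distance (equivalently h²(p,q) = (1/2)·∑_{i=1}^K (√p(i) − √q(i))²). -/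
open scoped ENNReal
open MeasureTheory

/-!
With `S = ∑ γᵢ` and `r = √(n / (n + S))`, every coordinate of `p̃` dominates `r² p̄`, so the
Bhattacharyya coefficient `A = ∑ √(p* p̄)` is multiplied by at least `r` when passing to `p̃`.
Since `A ≤ 1` (Cauchy–Schwarz) and `r ≤ 1`, `1 - r A ≤ (1 - A) + (1 - r)`, and
`1 - r ≤ S / (2n)` because `r ≥ 2n / (2n + S)`.
-/

theorem one_sub_sqrt_div_add_le {a b : ℝ} (ha : 0 < a) (hb : 0 ≤ b) :
    1 - √(a / (a + b)) ≤ b / (2 * a) := by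
  have hlower : 2 * a / (2 * a + b) ≤ √(a / (a + b)) := by
    refine Real.le_sqrt_of_sq_le ?_
    rw [div_pow, div_le_div_iff₀ (by positivity) (by positivity)]
    nlinarith [sq_nonneg b]
  have hupper : 1 - 2 * a / (2 * a + b) ≤ b / (2 * a) := by
    rw [one_sub_div (by positivity : 2 * a + b ≠ 0), add_sub_cancel_left]
    exact div_le_div_of_nonneg_left hb (by positivity) (by linarith)
  linarith

theorem sqrt_div_add_sq_mul_le {a b c γ : ℝ} (ha : 0 < a) (hb : 0 ≤ b) (hγ : 0 ≤ γ) :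
    √(a / (a + b)) ^ 2 * (c / a) ≤ (c + γ) / (a + b) := by
  rw [Real.sq_sqrt (by positivity), div_mul_div_comm, mul_comm (a + b), mul_div_mul_left _ _ ha.ne']
  gcongr
  linarith

namespace Hellinger

variable {ι : Type*} [Fintype ι]

/-- Halved squared Hellinger distance, in the form that is correct for probability vectors. -/
noncomputable def hellingerSq (p q : ι → ℝ) : ℝ :=
  1 - ∑ i, √(p i * q i)

theorem sum_sqrt_mul_le_one {p q : ι → ℝ} (hp0 : ∀ i, 0 ≤ p i) (hq0 : ∀ i, 0 ≤ q i)
    (hp1 : ∑ i, p i ≤ 1) (hq1 : ∑ i, q i ≤ 1) :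
    ∑ i, √(p i * q i) ≤ 1 := by
  simp_rw [Real.sqrt_mul (hp0 _)]
  calc ∑ i, √(p i) * √(q i) ≤ √(∑ i, p i) * √(∑ i, q i) :=
        Real.sum_sqrt_mul_sqrt_le _ hp0 hq0
    _ ≤ 1 * 1 := by
        gcongr <;> exact Real.sqrt_le_one.mpr ‹_›
    _ = 1 := one_mul 1

theorem mul_sum_sqrt_mul_le {p q q' : ι → ℝ} {r : ℝ} (hp0 : ∀ i, 0 ≤ p i) (hr : 0 ≤ r)
    (hqq' : ∀ i, r ^ 2 * q i ≤ q' i) :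
    r * ∑ i, √(p i * q i) ≤ ∑ i, √(p i * q' i) := by
  rw [Finset.mul_sum]
  refine Finset.sum_le_sum fun i _ => ?_
  calc r * √(p i * q i) = √(p i * (r ^ 2 * q i)) := by
        rw [mul_left_comm, Real.sqrt_mul (sq_nonneg r), Real.sqrt_sq hr]
    _ ≤ √(p i * q' i) := Real.sqrt_le_sqrt (mul_le_mul_of_nonneg_left (hqq' i) (hp0 i))

theorem hellingerSq_le_add_one_sub {p q q' : ι → ℝ} {r : ℝ} (hp0 : ∀ i, 0 ≤ p i)
    (hq0 : ∀ i, 0 ≤ q i) (hp1 : ∑ i, p i ≤ 1) (hq1 : ∑ i, q i ≤ 1) (hr0 : 0 ≤ r) (hr1 : r ≤ 1)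
    (hqq' : ∀ i, r ^ 2 * q i ≤ q' i) :
    hellingerSq p q' ≤ hellingerSq p q + (1 - r) := by
  have hA := sum_sqrt_mul_le_one hp0 hq0 hp1 hq1
  have hscaled := mul_sum_sqrt_mul_le hp0 hr0 hqq'
  unfold hellingerSq
  nlinarith [mul_nonneg (sub_nonneg.2 hA) (sub_nonneg.2 hr1)]

end Hellinger

open Hellinger

theorem hellinger_bias_general (K n : ℕ) (hn : 1 ≤ n)
    (pstar : Fin K → ℝ) (hp : pstar ∈ simplex K)
    (c : Fin K → ℕ) (hc : ∑ i, c i = n)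
    (γ : Fin K → ℝ) (hγ : ∀ i, 0 ≤ γ i) :
    1 - ∑ i, Real.sqrt (pstar i * (((c i : ℝ) + γ i) / ((n : ℝ) + ∑ j, γ j))) ≤
      (1 - ∑ i, Real.sqrt (pstar i * ((c i : ℝ) / n))) + (∑ i, γ i) / (2 * n) := by
  obtain ⟨hp0, hp1⟩ := hp
  have hn0 : (0 : ℝ) < n := by exact_mod_cast hn
  have hS : 0 ≤ ∑ j, γ j := Finset.sum_nonneg fun i _ => hγ i
  have hpbar : ∑ i, (c i : ℝ) / n = 1 := by
    rw [← Finset.sum_div, div_eq_one_iff_eq hn0.ne']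
    exact_mod_cast hc
  have hr1 : √(n / (n + ∑ j, γ j)) ≤ 1 :=
    Real.sqrt_le_one.mpr ((div_le_one (by positivity)).mpr (by linarith))
  calc _ ≤ (1 - ∑ i, √(pstar i * ((c i : ℝ) / n))) + (1 - √(n / (n + ∑ j, γ j))) :=
        hellingerSq_le_add_one_sub hp0 (fun i => by positivity) hp1.le hpbar.le
          (Real.sqrt_nonneg _) hr1 (fun i => sqrt_div_add_sq_mul_le hn0 hS (hγ i))
    _ ≤ _ := by gcongr; exact one_sub_sqrt_div_add_le hn0 hS

/-- adding `γᵢ`-bias increases the (halved squared) Hellinger distance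
by at most `(∑ γᵢ)/(2n)`. -/
theorem hellinger_bias (K n : ℕ) (hK : 2 ≤ K) (hn : 1 ≤ n)
    (pstar : Fin K → ℝ) (hp : pstar ∈ simplex K)
    (c : Fin K → ℕ) (hc : ∑ i, c i = n)
    (γ : Fin K → ℝ) (hγ : ∀ i, 0 ≤ γ i) :
    1 - ∑ i, Real.sqrt (pstar i * (((c i : ℝ) + γ i) / ((n : ℝ) + ∑ j, γ j))) ≤
      (1 - ∑ i, Real.sqrt (pstar i * ((c i : ℝ) / n))) + (∑ i, γ i) / (2 * n) :=
  hellinger_bias_general K n hn pstar hp c hc γ hγ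
end
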